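/- Fix λ₂ ≥ 0 and set λ̄₁ := 2‖Xᵀε − λ₂β*‖_∞; assume λ̄₁ > 0. Let β̄ ∈ argmin_{β∈ℝᵖ} { ‖Y − Xβ‖₂² + λ̄₁‖β‖₁ + λ₂‖β‖₂² } be the elastic net estimator. Then (1/n)‖X(β* − β̄)‖₂² ≤ (2/n)‖Xᵀε − λ₂β*‖_∞‖β*‖₁, and in particular (1/n)‖X(β* − β̄)‖₂² ≤ (2/n)(‖Xᵀε‖_∞ + λ₂‖β*‖_∞)‖β*‖₁ whenever additionally ‖Xᵀε − λ₂β*‖_∞ ≤ ‖Xᵀε‖_∞ + λ₂‖β*‖_∞ is used; the main claim is the first inequality. -/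
import Mathlib


open Matrix
open scoped BigOperators Classical

/-- Squared Euclidean norm of a vector. -/
noncomputable def sqNorm {n : ℕ} (v : Fin n → ℝ) : ℝ := ∑ i, (v i) ^ 2

/-- Euclidean norm of a vector. -/
noncomputable def l2Norm {n : ℕ} (v : Fin n → ℝ) : ℝ := Real.sqrt (∑ i, (v i) ^ 2)

/-- ℓ₁ norm of a vector. -/
noncomputable def l1Norm {p : ℕ} (v : Fin p → ℝ) : ℝ := ∑ i, |v i|

/-- ℓ_∞ (supremum) norm of a vector. -/
noncomputable def linfNorm {p : ℕ} (v : Fin p → ℝ) : ℝ := ⨆ i, |v i|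

lemma sqNorm_nonneg' {n : ℕ} (v : Fin n → ℝ) : 0 ≤ sqNorm v :=
  Finset.sum_nonneg fun _ _ => sq_nonneg _

lemma l1Norm_nonneg' {p : ℕ} (v : Fin p → ℝ) : 0 ≤ l1Norm v :=
  Finset.sum_nonneg fun _ _ => abs_nonneg _

lemma sqNorm_add' {n : ℕ} (a b : Fin n → ℝ) :
    sqNorm (a + b) = sqNorm a + 2 * (a ⬝ᵥ b) + sqNorm b := by
  simp only [sqNorm, dotProduct, Pi.add_apply, Finset.mul_sum,
    ← Finset.sum_add_distrib]
  exact Finset.sum_congr rfl fun i _ => by ring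

lemma sqNorm_smul' {n : ℕ} (c : ℝ) (a : Fin n → ℝ) :
    sqNorm (c • a) = c ^ 2 * sqNorm a := by
  simp only [sqNorm, Pi.smul_apply, smul_eq_mul, Finset.mul_sum]
  exact Finset.sum_congr rfl fun i _ => by ring

lemma mulVec_dot' {n p : ℕ} (X : Matrix (Fin n) (Fin p) ℝ) (u : Fin p → ℝ) (w : Fin n → ℝ) :
    (X.mulVec u) ⬝ᵥ w = u ⬝ᵥ (Xᵀ.mulVec w) := by
  simp only [dotProduct, Matrix.mulVec, Matrix.transpose_apply,
    Finset.sum_mul, Finset.mul_sum]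
  rw [Finset.sum_comm]
  exact Finset.sum_congr rfl fun i _ => Finset.sum_congr rfl fun j _ => by ring

/-- Penalty bound for the elastic net with `λ̄₁ = 2‖Xᵀε − λ₂β*‖_∞`:
`(1/n)‖X(β*−β̄)‖₂² ≤ (2/n)‖Xᵀε − λ₂β*‖_∞‖β*‖₁`, and in particular
`(1/n)‖X(β*−β̄)‖₂² ≤ (2/n)(‖Xᵀε‖_∞ + λ₂‖β*‖_∞)‖β*‖₁`. -/
theorem elastic_net_bound
    {n p : ℕ} (hn : 0 < n)
    (Y ε : Fin n → ℝ) (X : Matrix (Fin n) (Fin p) ℝ) (βstar : Fin p → ℝ)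
    (hmodel : Y = X.mulVec βstar + ε)
    (lam2 : ℝ) (hlam2 : 0 ≤ lam2)
    (lam1Bar : ℝ) (hlam1 : lam1Bar = 2 * linfNorm (Xᵀ.mulVec ε - lam2 • βstar))
    (hlam1pos : 0 < lam1Bar)
    (βbar : Fin p → ℝ)
    (hβbar : ∀ β : Fin p → ℝ,
      sqNorm (Y - X.mulVec βbar) + lam1Bar * l1Norm βbar + lam2 * sqNorm βbar
        ≤ sqNorm (Y - X.mulVec β) + lam1Bar * l1Norm β + lam2 * sqNorm β) :
    (1 / n) * sqNorm (X.mulVec (βstar - βbar))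
        ≤ (2 / n) * linfNorm (Xᵀ.mulVec ε - lam2 • βstar) * l1Norm βstar ∧
      (1 / n) * sqNorm (X.mulVec (βstar - βbar))
        ≤ (2 / n) * (linfNorm (Xᵀ.mulVec ε) + lam2 * linfNorm βstar) * l1Norm βstar := by
  classical
  set δ : Fin p → ℝ := βstar - βbar with hδdef
  set v : Fin p → ℝ := Xᵀ.mulVec ε - lam2 • βstar with hvdef
  set L : ℝ := linfNorm v with hLdef
  have hLpos : 0 < L := by rw [hlam1] at hlam1pos; linarith
  set S : ℝ := sqNorm (X.mulVec δ) with hSdef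
  set Q : ℝ := sqNorm δ with hQdef
  set B1 : ℝ := l1Norm βbar with hB1def
  set B2 : ℝ := l1Norm βstar with hB2def
  set E : ℝ := (X.mulVec δ) ⬝ᵥ ε with hEdef
  set P : ℝ := βbar ⬝ᵥ δ with hPdef
  have hSnn : 0 ≤ S := sqNorm_nonneg' _
  have hQnn : 0 ≤ Q := sqNorm_nonneg' _
  have hB1nn : 0 ≤ B1 := l1Norm_nonneg' _
  have hB2nn : 0 ≤ B2 := l1Norm_nonneg' _
  -- the per-t inequality from comparing against βbar + t • δ
  have key : ∀ t : ℝ, 0 < t → t ≤ 1 →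
      2*S + 2*E + 2*L*B1 - 2*L*B2 - 2*lam2*P ≤ t*(S + lam2*Q) := by
    intro t ht0 ht1
    have hβt := hβbar (βbar + t • δ)
    have e1 : Y - X.mulVec βbar = X.mulVec δ + ε := by
      rw [hmodel, hδdef, Matrix.mulVec_sub]
      abel
    have e2 : Y - X.mulVec (βbar + t • δ) = (1-t) • (X.mulVec δ) + ε := by
      rw [hmodel, Matrix.mulVec_add, Matrix.mulVec_smul, hδdef, Matrix.mulVec_sub]
      module
    have q1 : sqNorm (Y - X.mulVec βbar) = S + 2*E + sqNorm ε := by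
      rw [e1, sqNorm_add']
    have q2 : sqNorm (Y - X.mulVec (βbar + t • δ))
        = (1-t)^2*S + 2*((1-t)*E) + sqNorm ε := by
      rw [e2, sqNorm_add', sqNorm_smul', smul_dotProduct, smul_eq_mul]
    have q3 : sqNorm (βbar + t • δ) = sqNorm βbar + 2*(t*P) + t^2*Q := by
      rw [sqNorm_add', sqNorm_smul', dotProduct_smul, smul_eq_mul, hPdef]
    have q4 : l1Norm (βbar + t • δ) ≤ (1-t)*B1 + t*B2 := by
      have hpt : ∀ i, |(βbar + t • δ) i| ≤ (1-t)*|βbar i| + t*|βstar i| := by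
        intro i
        have heq : (βbar + t • δ) i = (1-t)*βbar i + t*βstar i := by
          simp only [hδdef, Pi.add_apply, Pi.smul_apply, Pi.sub_apply, smul_eq_mul]
          ring
        rw [heq]
        calc |(1-t)*βbar i + t*βstar i| ≤ |(1-t)*βbar i| + |t*βstar i| := abs_add_le _ _
          _ = (1-t)*|βbar i| + t*|βstar i| := by
              rw [abs_mul, abs_mul, abs_of_nonneg (by linarith : (0:ℝ) ≤ 1-t),
                abs_of_nonneg ht0.le]
      calc l1Norm (βbar + t • δ) ≤ ∑ i, ((1-t)*|βbar i| + t*|βstar i|) :=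
            Finset.sum_le_sum fun i _ => hpt i
        _ = (1-t)*B1 + t*B2 := by
            rw [Finset.sum_add_distrib, ← Finset.mul_sum, ← Finset.mul_sum,
              hB1def, hB2def, l1Norm, l1Norm]
    have hβt' : S + 2*E + sqNorm ε + 2*L*B1 + lam2*sqNorm βbar
        ≤ (1-t)^2*S + 2*((1-t)*E) + sqNorm ε + 2*L*((1-t)*B1 + t*B2)
          + lam2*(sqNorm βbar + 2*(t*P) + t^2*Q) := by
      have h4' : lam1Bar * l1Norm (βbar + t • δ) ≤ 2*L*((1-t)*B1 + t*B2) := by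
        rw [hlam1]
        exact mul_le_mul_of_nonneg_left q4 (by linarith)
      have hβtB : lam1Bar * B1 = 2*L*B1 := by rw [hlam1]
      calc S + 2*E + sqNorm ε + 2*L*B1 + lam2*sqNorm βbar
          = sqNorm (Y - X.mulVec βbar) + lam1Bar * l1Norm βbar + lam2 * sqNorm βbar := by
            rw [q1, hβtB]; try ring
        _ ≤ sqNorm (Y - X.mulVec (βbar + t • δ)) + lam1Bar * l1Norm (βbar + t • δ)
              + lam2 * sqNorm (βbar + t • δ) := hβt
        _ ≤ (1-t)^2*S + 2*((1-t)*E) + sqNorm ε + 2*L*((1-t)*B1 + t*B2)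
              + lam2*(sqNorm βbar + 2*(t*P) + t^2*Q) := by
            rw [q2, q3]; linarith [h4']
    have hA : t * (2*S + 2*E + 2*L*B1 - 2*L*B2 - 2*lam2*P - t*(S + lam2*Q)) ≤ t * 0 := by
      rw [mul_zero]; nlinarith [hβt']
    have := le_of_mul_le_mul_left hA ht0
    linarith
  -- take t → 0⁺
  have hlim : 2*S + 2*E + 2*L*B1 - 2*L*B2 - 2*lam2*P ≤ 0 := by
    by_contra hcon
    push_neg at hcon
    set a : ℝ := 2*S + 2*E + 2*L*B1 - 2*L*B2 - 2*lam2*P with hadef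
    have hDnn : 0 ≤ S + lam2*Q := by positivity
    have hD1 : 0 < S + lam2*Q + 1 := by linarith
    set t : ℝ := min 1 (a / (S + lam2*Q + 1)) with htdef
    have ht0 : 0 < t := lt_min one_pos (div_pos hcon hD1)
    have ht1 : t ≤ 1 := min_le_left _ _
    have h1 := key t ht0 ht1
    have h2 : t * (S + lam2*Q) < a := by
      calc t * (S + lam2*Q) ≤ (a / (S + lam2*Q + 1)) * (S + lam2*Q) :=
            mul_le_mul_of_nonneg_right (min_le_right _ _) hDnn
        _ < a := by
            rw [div_mul_eq_mul_div, div_lt_iff₀ hD1]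
            nlinarith
    linarith
  -- rewrite E and P
  have hE : E = δ ⬝ᵥ v + lam2 * (δ ⬝ᵥ βstar) := by
    rw [hEdef, mulVec_dot', hvdef]
    rw [dotProduct_sub, dotProduct_smul, smul_eq_mul]
    ring
  have hP : P = δ ⬝ᵥ βstar - Q := by
    rw [hPdef, hQdef, hδdef]
    simp only [sqNorm, dotProduct, Pi.sub_apply, ← Finset.sum_sub_distrib]
    exact Finset.sum_congr rfl fun i _ => by ring
  -- bound |δ ⬝ᵥ v|
  have hvle : ∀ i, |v i| ≤ L := by
    intro i
    rw [hLdef]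
    unfold linfNorm
    exact le_ciSup (f := fun j => |v j|) (Set.finite_range _).bddAbove i
  have habs : |δ ⬝ᵥ v| ≤ L * l1Norm δ := by
    calc |δ ⬝ᵥ v| ≤ ∑ i, |δ i * v i| := Finset.abs_sum_le_sum_abs _ _
      _ ≤ ∑ i, |δ i| * L := Finset.sum_le_sum fun i _ => by
          rw [abs_mul]
          exact mul_le_mul_of_nonneg_left (hvle i) (abs_nonneg _)
      _ = L * l1Norm δ := by rw [← Finset.sum_mul, l1Norm, mul_comm]
  have hδl1 : l1Norm δ ≤ B2 + B1 := by
    rw [hB1def, hB2def, l1Norm, l1Norm, l1Norm, ← Finset.sum_add_distrib]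
    exact Finset.sum_le_sum fun i _ => by
      simp only [hδdef, Pi.sub_apply]; exact abs_sub _ _
  -- main bound: S ≤ 2 L B2
  have hmain : S ≤ 2 * L * B2 := by
    have h1 : -(δ ⬝ᵥ v) ≤ L * (B2 + B1) := by
      have := neg_abs_le (δ ⬝ᵥ v)
      have := mul_le_mul_of_nonneg_left hδl1 hLpos.le
      linarith
    have hlQ : 0 ≤ lam2 * Q := mul_nonneg hlam2 hQnn
    rw [hE, hP] at hlim
    linarith
  -- conclusions
  have hn' : (0:ℝ) ≤ 1 / (n:ℝ) := by positivity
  have c1 : (1 / (n:ℝ)) * S ≤ (2 / (n:ℝ)) * L * B2 := by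
    calc (1 / (n:ℝ)) * S ≤ (1 / (n:ℝ)) * (2*L*B2) := mul_le_mul_of_nonneg_left hmain hn'
      _ = (2 / (n:ℝ)) * L * B2 := by ring
  refine ⟨c1, ?_⟩
  -- second bound
  have hpne : Nonempty (Fin p) := by
    by_contra h
    rw [not_nonempty_iff] at h
    have : L = 0 := by
      rw [hLdef]; unfold linfNorm; exact Real.iSup_of_isEmpty _
    linarith
  have hM : L ≤ linfNorm (Xᵀ.mulVec ε) + lam2 * linfNorm βstar := by
    rw [hLdef]
    unfold linfNorm
    apply ciSup_le
    intro i
    have h1 : |Xᵀ.mulVec ε i| ≤ ⨆ j, |Xᵀ.mulVec ε j| :=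
      le_ciSup (f := fun j => |Xᵀ.mulVec ε j|) (Set.finite_range _).bddAbove i
    have h2 : |βstar i| ≤ ⨆ j, |βstar j| :=
      le_ciSup (f := fun j => |βstar j|) (Set.finite_range _).bddAbove i
    have h3 : |v i| ≤ |Xᵀ.mulVec ε i| + lam2 * |βstar i| := by
      rw [hvdef]
      simp only [Pi.sub_apply, Pi.smul_apply, smul_eq_mul]
      calc |Xᵀ.mulVec ε i - lam2 * βstar i|
          ≤ |Xᵀ.mulVec ε i| + |lam2 * βstar i| := abs_sub _ _
        _ = |Xᵀ.mulVec ε i| + lam2 * |βstar i| := by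
            rw [abs_mul, abs_of_nonneg hlam2]
    have h4 : lam2 * |βstar i| ≤ lam2 * ⨆ j, |βstar j| :=
      mul_le_mul_of_nonneg_left h2 hlam2
    linarith
  have hfac : (0:ℝ) ≤ (2 / (n:ℝ)) * B2 := by positivity
  calc (1 / (n:ℝ)) * S ≤ (2 / (n:ℝ)) * L * B2 := c1
    _ ≤ (2 / (n:ℝ)) * (linfNorm (Xᵀ.mulVec ε) + lam2 * linfNorm βstar) * B2 := by
        have := mul_le_mul_of_nonneg_right
          (mul_le_mul_of_nonneg_left hM (by positivity : (0:ℝ) ≤ 2 / (n:ℝ))) hB2nn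
        linarith
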